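/- In the Lorentzian metric -dx² + dy² on the half-plane y > 0 scaled by 1/y², every maximal timelike geodesic has length (proper time) exactly π; in particular all timelike geodesics are bounded in length by π. -/

import Mathlib

open Real MeasureTheory

/-- A function with zero derivative on an open interval is constant there. -/
lemma const_on_Ioo {a b : ℝ} {f : ℝ → ℝ}
    (hf : ∀ τ ∈ Set.Ioo a b, HasDerivAt f 0 τ) :
    ∀ p ∈ Set.Ioo a b, ∀ q ∈ Set.Ioo a b, f p = f q := by
  intro p hp q hq
  have h := (convex_Ioo a b).norm_image_sub_le_of_norm_hasDerivWithin_le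
    (f' := fun _ => (0:ℝ)) (C := 0) (fun t ht => (hf t ht).hasDerivWithinAt)
    (fun t ht => by simp) hq hp
  simp only [zero_mul, norm_le_zero_iff, sub_eq_zero] at h
  exact h


/-- In the Lorentzian metric `(-dx² + dy²)/y²` on `{y > 0}`, every
timelike geodesic has length (proper time) at most `π`, and the maximal timelike
geodesics `x(τ) = x₀ - y₀ tan τ`, `y(τ) = y₀/cos τ`, `τ ∈ (-π/2, π/2)` have length
exactly `π`. -/
theorem stmt7 :
    (∀ (a b : ℝ), a < b → ∀ x y : ℝ → ℝ,
      ContDiffOn ℝ 2 x (Set.Ioo a b) → ContDiffOn ℝ 2 y (Set.Ioo a b) →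
      (∀ τ ∈ Set.Ioo a b, 0 < y τ) →
      -- geodesic equations
      (∀ τ ∈ Set.Ioo a b,
        deriv (deriv x) τ - (2 / y τ) * deriv x τ * deriv y τ = 0) →
      (∀ τ ∈ Set.Ioo a b,
        y τ * deriv (deriv y) τ - (deriv y τ) ^ 2 - (deriv x τ) ^ 2 = 0) →
      -- timelike
      (∀ τ ∈ Set.Ioo a b, -(deriv x τ) ^ 2 + (deriv y τ) ^ 2 < 0) →
      (∫ τ in Set.Ioo a b,
          Real.sqrt (((deriv x τ) ^ 2 - (deriv y τ) ^ 2) / (y τ) ^ 2)) ≤ π) ∧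
    ∀ (x₀ y₀ : ℝ), 0 < y₀ →
      (∫ τ in Set.Ioo (-(π / 2)) (π / 2),
        Real.sqrt (((deriv (fun t => x₀ - y₀ * tan t) τ) ^ 2
            - (deriv (fun t => y₀ / cos t) τ) ^ 2) / (y₀ / cos τ) ^ 2)) = π := by
  constructor
  · intro a b hab x y hx hy hypos hgx hgy htl
    set s : Set ℝ := Set.Ioo a b with hs
    have hso : IsOpen s := isOpen_Ioo
    -- differentiability data
    have hx2 : ContDiffOn ℝ (1 + 1) x s := by norm_num; exact hx
    have hy2 : ContDiffOn ℝ (1 + 1) y s := by norm_num; exact hy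
    obtain ⟨hxd, -, hx'⟩ := (contDiffOn_succ_iff_deriv_of_isOpen hso).1 hx2
    obtain ⟨hyd, -, hy'⟩ := (contDiffOn_succ_iff_deriv_of_isOpen hso).1 hy2
    have hxd' : DifferentiableOn ℝ (deriv x) s := hx'.differentiableOn one_ne_zero
    have hyd' : DifferentiableOn ℝ (deriv y) s := hy'.differentiableOn one_ne_zero
    have hdy : ∀ τ ∈ s, HasDerivAt y (deriv y τ) τ := fun τ hτ =>
      ((hyd τ hτ).differentiableAt (hso.mem_nhds hτ)).hasDerivAt
    have hdx' : ∀ τ ∈ s, HasDerivAt (deriv x) (deriv (deriv x) τ) τ := fun τ hτ =>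
      ((hxd' τ hτ).differentiableAt (hso.mem_nhds hτ)).hasDerivAt
    have hdy' : ∀ τ ∈ s, HasDerivAt (deriv y) (deriv (deriv y) τ) τ := fun τ hτ =>
      ((hyd' τ hτ).differentiableAt (hso.mem_nhds hτ)).hasDerivAt
    -- the conserved quantity
    set Q : ℝ → ℝ := fun τ => ((deriv x τ) ^ 2 - (deriv y τ) ^ 2) / (y τ) ^ 2 with hQdef
    have hQ0 : ∀ τ ∈ s, HasDerivAt Q 0 τ := by
      intro τ hτ
      have hy0 : 0 < y τ := hypos τ hτ
      have e1 : deriv (deriv x) τ * y τ = 2 * deriv x τ * deriv y τ := by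
        have := hgx τ hτ
        field_simp at this
        linarith [this]
      have e2 : y τ * deriv (deriv y) τ = (deriv y τ) ^ 2 + (deriv x τ) ^ 2 := by
        have := hgy τ hτ; linarith
      have h := (((hdx' τ hτ).pow 2).sub ((hdy' τ hτ).pow 2)).div
        ((hdy τ hτ).pow 2) (by simpa using pow_ne_zero 2 hy0.ne')
      convert h using 1
      · rfl
      · rfl
      · rfl
      rw [eq_comm, div_eq_zero_iff]
      left
      push_cast
      simp only [Pi.pow_apply, Pi.sub_apply]
      linear_combination (2 * deriv x τ * y τ) * e1 - (2 * deriv y τ * y τ) * e2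
    have m : ℝ := (a + b) / 2
    have hm : (a + b) / 2 ∈ s := by constructor <;> [linarith; linarith]
    have hQc : ∀ τ ∈ s, Q τ = Q ((a + b) / 2) := fun τ hτ => const_on_Ioo hQ0 τ hτ _ hm
    have hQpos : ∀ τ ∈ s, 0 < Q τ := by
      intro τ hτ
      have h1 := htl τ hτ
      have h2 := hypos τ hτ
      have : 0 < (deriv x τ) ^ 2 - (deriv y τ) ^ 2 := by linarith
      exact div_pos this (by positivity)
    set c : ℝ := Real.sqrt (Q ((a + b) / 2)) with hcdef
    have hcpos : 0 < c := Real.sqrt_pos.2 (hQpos _ hm)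
    have hc2 : ∀ τ ∈ s, c ^ 2 * (y τ) ^ 2 = (deriv x τ) ^ 2 - (deriv y τ) ^ 2 := by
      intro τ hτ
      have : c ^ 2 = Q τ := by
        rw [hcdef, Real.sq_sqrt (hQpos _ hm).le, hQc τ hτ]
      have hy0 := hypos τ hτ
      rw [this, hQdef]
      exact div_mul_cancel₀ _ (by positivity)
    -- the integral equals c * (b - a)
    have hInt : (∫ τ in s, Real.sqrt (((deriv x τ) ^ 2 - (deriv y τ) ^ 2) / (y τ) ^ 2))
        = (b - a) * c := by
      have heq : Set.EqOn (fun τ => Real.sqrt (((deriv x τ) ^ 2 - (deriv y τ) ^ 2) / (y τ) ^ 2))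
          (fun _ => c) s := by
        intro τ hτ
        simp only
        rw [show ((deriv x τ) ^ 2 - (deriv y τ) ^ 2) / (y τ) ^ 2 = Q τ from rfl, hQc τ hτ]
      rw [setIntegral_congr_fun measurableSet_Ioo heq]
      simp only [integral_const, MeasurableSet.univ, Measure.restrict_apply, Set.univ_inter,
        Real.volume_Ioo, smul_eq_mul]
      rw [Measure.real, Measure.restrict_apply MeasurableSet.univ, Set.univ_inter, Real.volume_Ioo,
        ENNReal.toReal_ofReal (by linarith : (0:ℝ) ≤ b - a)]
    rw [hInt]
    -- the key bound: w = arctan (y'/(c y)) - c τ is constant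
    set w : ℝ → ℝ := fun t => Real.arctan (deriv y t / (c * y t)) - c * t with hwdef
    have hw0 : ∀ τ ∈ s, HasDerivAt w 0 τ := by
      intro τ hτ
      have hy0 : 0 < y τ := hypos τ hτ
      have hcy : c * y τ ≠ 0 := by positivity
      have e2 : y τ * deriv (deriv y) τ = (deriv y τ) ^ 2 + (deriv x τ) ^ 2 := by
        have := hgy τ hτ; linarith
      have ec := hc2 τ hτ
      have hg : HasDerivAt (fun t => deriv y t / (c * y t))
          ((deriv (deriv y) τ * (c * y τ) - deriv y τ * (c * deriv y τ)) / (c * y τ) ^ 2) τ :=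
        (hdy' τ hτ).div ((hdy τ hτ).const_mul c) hcy
      have harctan := (Real.hasDerivAt_arctan (deriv y τ / (c * y τ))).comp τ hg
      have h := harctan.sub ((hasDerivAt_id τ).const_mul c)
      have hpos1 : (0:ℝ) < 1 + (deriv y τ / (c * y τ)) ^ 2 := by positivity
      convert h using 1
      · rfl
      · rfl
      · rfl
      rw [eq_comm, sub_eq_zero]
      rw [mul_one]
      field_simp
      ring_nf
      linear_combination e2 - ec
    have hwc : ∀ p ∈ s, ∀ q ∈ s, w p = w q := const_on_Ioo hw0
    have hseg : ∀ p ∈ s, ∀ q ∈ s, c * (q - p) < π := by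
      intro p hp q hq
      have h := hwc p hp q hq
      have h1 : Real.arctan (deriv y q / (c * y q)) < π / 2 := Real.arctan_lt_pi_div_two _
      have h2 : -(π / 2) < Real.arctan (deriv y p / (c * y p)) := Real.neg_pi_div_two_lt_arctan _
      simp only [hwdef] at h
      nlinarith
    by_contra hcon
    push_neg at hcon
    set η : ℝ := min ((b - a) / 4) (((b - a) * c - π) / (2 * c)) with hη
    have hηpos : 0 < η := lt_min (by linarith) (div_pos (by linarith) (by positivity))
    have hη1 : η ≤ (b - a) / 4 := min_le_left _ _
    have hη2 : η ≤ ((b - a) * c - π) / (2 * c) := min_le_right _ _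
    have hp : a + η ∈ s := ⟨by linarith, by linarith⟩
    have hq : b - η ∈ s := ⟨by linarith, by linarith⟩
    have := hseg _ hp _ hq
    have h2cη : 2 * c * η ≤ (b - a) * c - π := by
      have h3 := (le_div_iff₀ (by positivity : (0:ℝ) < 2 * c)).1 hη2
      nlinarith
    nlinarith
  · intro x₀ y₀ hy₀
    have key : ∀ τ ∈ Set.Ioo (-(π/2)) (π/2),
        Real.sqrt (((deriv (fun t => x₀ - y₀ * tan t) τ) ^ 2
              - (deriv (fun t => y₀ / cos t) τ) ^ 2) / (y₀ / cos τ) ^ 2) = 1 := by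
      intro τ hτ
      have hc : 0 < cos τ := Real.cos_pos_of_mem_Ioo hτ
      have hd1 : deriv (fun t => x₀ - y₀ * tan t) τ = -(y₀ * (1 / cos τ ^ 2)) :=
        (((Real.hasDerivAt_tan hc.ne').const_mul y₀).const_sub x₀).deriv
      have hd2 : deriv (fun t => y₀ / cos t) τ = (0 * cos τ - y₀ * (-sin τ)) / cos τ ^ 2 :=
        ((hasDerivAt_const τ y₀).div (Real.hasDerivAt_cos τ) hc.ne').deriv
      rw [hd1, hd2]
      have h1 : ((-(y₀ * (1 / cos τ ^ 2))) ^ 2 - ((0 * cos τ - y₀ * (-sin τ)) / cos τ ^ 2) ^ 2)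
          / (y₀ / cos τ) ^ 2 = 1 := by
        have hs := sin_sq_add_cos_sq τ
        field_simp
        linear_combination (-(y₀ ^ 2)) * hs
      rw [h1, Real.sqrt_one]
    rw [setIntegral_congr_fun measurableSet_Ioo key]
    simp only [integral_const, MeasurableSet.univ, Measure.restrict_apply, Set.univ_inter,
      Real.volume_Ioo, smul_eq_mul, mul_one]
    rw [Measure.real, Measure.restrict_apply MeasurableSet.univ, Set.univ_inter, Real.volume_Ioo,
      ENNReal.toReal_ofReal (by linarith [Real.pi_pos] : (0:ℝ) ≤ π/2 - -(π/2))]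
    ring
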